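/- For every ρ > 1, the total variation distance between N(0, ρ²) and N(0, 1) satisfies d_TV( N(0,ρ²), N(0,1) ) ≤ (2/√π)·(ρ−1)·√( (log ρ)/(ρ²−1) )·exp( −(log ρ)/(ρ²−1) ) ≤ √(2/(π·e))·(ρ−1). -/

import Mathlib

open MeasureTheory ProbabilityTheory

/-- Total variation distance between two measures:
`d_TV(μ,ν) = sup_{Borel A} |μ(A) − ν(A)|`. -/
noncomputable def dTV {α : Type*} [MeasurableSpace α] (μ ν : Measure α) : ℝ :=
  ⨆ A : {s : Set α // MeasurableSet s}, |(μ A.1).toReal - (ν A.1).toReal|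

namespace Stmt3Aux

open Real

noncomputable def hpdf : ℝ → ℝ := gaussianPDFReal 0 1
noncomputable def gpdf (ρ : ℝ) : ℝ → ℝ := gaussianPDFReal 0 (Real.toNNReal (ρ ^ 2))
noncomputable def Lc (ρ : ℝ) : ℝ := Real.log ρ / (ρ ^ 2 - 1)
noncomputable def sc (ρ : ℝ) : ℝ := Real.sqrt (2 * Lc ρ)
noncomputable def tc (ρ : ℝ) : ℝ := ρ * sc ρ

variable {ρ : ℝ}

lemma Lpos (hρ : 1 < ρ) : 0 < Lc ρ :=
  div_pos (Real.log_pos hρ) (by nlinarith)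

lemma spos (hρ : 1 < ρ) : 0 < sc ρ := Real.sqrt_pos.2 (by linarith [Lpos hρ])

lemma ssq (hρ : 1 < ρ) : sc ρ ^ 2 = 2 * Lc ρ := Real.sq_sqrt (by linarith [Lpos hρ])

lemma slet (hρ : 1 < ρ) : sc ρ ≤ tc ρ := by
  have := spos hρ; unfold tc; nlinarith

lemma sqrt2pi_pos : 0 < Real.sqrt (2 * π) := Real.sqrt_pos.2 (by positivity)

lemma hval (x : ℝ) : hpdf x = (Real.sqrt (2 * π))⁻¹ * Real.exp (-x ^ 2 / 2) := by
  simp [hpdf, gaussianPDFReal]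

lemma gval (hρ : 1 < ρ) (x : ℝ) :
    gpdf ρ x = (ρ * Real.sqrt (2 * π))⁻¹ * Real.exp (-x ^ 2 / (2 * ρ ^ 2)) := by
  have hρ0 : (0:ℝ) < ρ := by linarith
  unfold gpdf gaussianPDFReal
  rw [Real.coe_toNNReal _ (sq_nonneg ρ), show 2 * π * ρ ^ 2 = ρ ^ 2 * (2 * π) by ring,
    Real.sqrt_mul (sq_nonneg ρ), Real.sqrt_sq hρ0.le]
  ring_nf

lemma gh_div (hρ : 1 < ρ) (x : ℝ) : gpdf ρ x = ρ⁻¹ * hpdf (x / ρ) := by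
  have hρ0 : (0:ℝ) < ρ := by linarith
  rw [gval hρ, hval, div_pow, show -(x ^ 2 / ρ ^ 2) / 2 = -x ^ 2 / (2 * ρ ^ 2) by ring,
    mul_inv]
  ring

lemma crossing (hρ : 1 < ρ) (x : ℝ) : gpdf ρ x ≤ hpdf x ↔ x ^ 2 ≤ tc ρ ^ 2 := by
  have hρ0 : (0:ℝ) < ρ := by linarith
  have hden : (0:ℝ) < ρ ^ 2 - 1 := by nlinarith
  have h1 : hpdf x = Real.exp (Real.log ρ + -x ^ 2 / 2) * (ρ * Real.sqrt (2 * π))⁻¹ := by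
    rw [hval, Real.exp_add, Real.exp_log hρ0, mul_inv]
    field_simp
  have h2 : gpdf ρ x = Real.exp (-x ^ 2 / (2 * ρ ^ 2)) * (ρ * Real.sqrt (2 * π))⁻¹ := by
    rw [gval hρ]; ring
  rw [h1, h2, mul_le_mul_iff_of_pos_right (by positivity), Real.exp_le_exp]
  have ht : tc ρ ^ 2 = 2 * ρ ^ 2 * Real.log ρ / (ρ ^ 2 - 1) := by
    unfold tc; rw [mul_pow, ssq hρ]; unfold Lc; field_simp
  rw [ht, le_div_iff₀ hden, div_le_iff₀ (by positivity : (0:ℝ) < 2 * ρ ^ 2)]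
  constructor <;> intro h <;> nlinarith

lemma vne (hρ : 1 < ρ) : Real.toNNReal (ρ ^ 2) ≠ 0 := by
  rw [Ne, Real.toNNReal_eq_zero, not_le]
  nlinarith

lemma hInt : Integrable hpdf := integrable_gaussianPDFReal 0 1

lemma gInt : Integrable (gpdf ρ) := integrable_gaussianPDFReal 0 _

lemma hOne : ∫ x, hpdf x = 1 := integral_gaussianPDFReal_eq_one 0 one_ne_zero

lemma gOne (hρ : 1 < ρ) : ∫ x, gpdf ρ x = 1 := integral_gaussianPDFReal_eq_one 0 (vne hρ)

lemma memI (hρ : 1 < ρ) (x : ℝ) : x ∈ Set.Icc (-(tc ρ)) (tc ρ) ↔ x ^ 2 ≤ tc ρ ^ 2 := by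
  have ht : 0 < tc ρ := mul_pos (by linarith) (spos hρ)
  rw [Set.mem_Icc]
  constructor
  · rintro ⟨h1, h2⟩; nlinarith
  · intro h
    constructor <;> nlinarith [sq_nonneg (x + tc ρ), sq_nonneg (x - tc ρ)]

lemma keyA (hρ : 1 < ρ) {A : Set ℝ} (hA : MeasurableSet A) :
    |(∫ x in A, gpdf ρ x) - ∫ x in A, hpdf x| ≤
      ∫ x in Set.Icc (-(tc ρ)) (tc ρ), (hpdf x - gpdf ρ x) := by
  set I := Set.Icc (-(tc ρ)) (tc ρ) with hIdef
  have hI : MeasurableSet I := measurableSet_Icc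
  have Hh : Integrable hpdf := hInt
  have Hg : Integrable (gpdf ρ) := gInt
  have Hsub : Integrable (fun x => hpdf x - gpdf ρ x) := Hh.sub Hg
  have Hsub' : Integrable (fun x => gpdf ρ x - hpdf x) := Hg.sub Hh
  have hpos : ∀ x ∈ I, 0 ≤ hpdf x - gpdf ρ x := fun x hx =>
    sub_nonneg.2 ((crossing hρ x).2 ((memI hρ x).1 hx))
  have hneg : ∀ x ∉ I, hpdf x - gpdf ρ x ≤ 0 := by
    intro x hx
    have hx2 : ¬ x ^ 2 ≤ tc ρ ^ 2 := fun h => hx ((memI hρ x).2 h)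
    exact sub_nonpos.2 (le_of_not_ge fun hgh => hx2 ((crossing hρ x).1 hgh))
  have side1 : (∫ x in A, (hpdf x - gpdf ρ x)) ≤ ∫ x in I, (hpdf x - gpdf ρ x) := by
    rw [← integral_indicator hA, ← integral_indicator hI]
    refine integral_mono (Hsub.indicator hA) (Hsub.indicator hI) fun x => ?_
    by_cases h1 : x ∈ A <;> by_cases h2 : x ∈ I
    · rw [Set.indicator_of_mem h1, Set.indicator_of_mem h2]
    · rw [Set.indicator_of_mem h1, Set.indicator_of_notMem h2]; exact hneg x h2
    · rw [Set.indicator_of_notMem h1, Set.indicator_of_mem h2]; exact hpos x h2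
    · rw [Set.indicator_of_notMem h1, Set.indicator_of_notMem h2]
  have side2 : (∫ x in A, (gpdf ρ x - hpdf x)) ≤ ∫ x in Iᶜ, (gpdf ρ x - hpdf x) := by
    rw [← integral_indicator hA, ← integral_indicator hI.compl]
    refine integral_mono (Hsub'.indicator hA) (Hsub'.indicator hI.compl) fun x => ?_
    by_cases h1 : x ∈ A <;> by_cases h2 : x ∈ I
    · rw [Set.indicator_of_mem h1, Set.indicator_of_notMem (show x ∉ Iᶜ from fun hc => hc h2)]
      linarith [hpos x h2]
    · rw [Set.indicator_of_mem h1, Set.indicator_of_mem (show x ∈ Iᶜ from h2)]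
    · rw [Set.indicator_of_notMem h1,
        Set.indicator_of_notMem (show x ∉ Iᶜ from fun hc => hc h2)]
    · rw [Set.indicator_of_notMem h1, Set.indicator_of_mem (show x ∈ Iᶜ from h2)]
      linarith [hneg x h2]
  have htot : (∫ x, (gpdf ρ x - hpdf x)) = 0 := by
    rw [integral_sub Hg Hh, gOne hρ, hOne]; ring
  have hIneg : (∫ x in I, (gpdf ρ x - hpdf x)) = -∫ x in I, (hpdf x - gpdf ρ x) := by
    rw [← integral_neg]
    exact integral_congr_ae (Filter.Eventually.of_forall fun x => by ring)
  have hsplit := integral_add_compl hI Hsub'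
  have hcompl : (∫ x in Iᶜ, (gpdf ρ x - hpdf x)) = ∫ x in I, (hpdf x - gpdf ρ x) := by
    rw [htot] at hsplit; linarith
  have hAint : (∫ x in A, gpdf ρ x) - ∫ x in A, hpdf x = ∫ x in A, (gpdf ρ x - hpdf x) :=
    (integral_sub Hg.restrict Hh.restrict).symm
  have hAint' : (∫ x in A, hpdf x) - ∫ x in A, gpdf ρ x = ∫ x in A, (hpdf x - gpdf ρ x) :=
    (integral_sub Hh.restrict Hg.restrict).symm
  rw [abs_le]
  constructor
  · nlinarith [side1, hAint']
  · nlinarith [side2, hcompl, hAint]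

lemma heven (x : ℝ) : hpdf (-x) = hpdf x := by
  rw [hval, hval, neg_pow]; norm_num

lemma Eval (hρ : 1 < ρ) :
    (∫ x in Set.Icc (-(tc ρ)) (tc ρ), (hpdf x - gpdf ρ x)) =
      2 * ∫ x in (sc ρ)..(tc ρ), hpdf x := by
  have hρ0 : (0:ℝ) < ρ := by linarith
  have Hh : Integrable hpdf := hInt
  have Hg : Integrable (gpdf ρ) := gInt
  have hts : -(tc ρ) ≤ tc ρ := by nlinarith [spos hρ, slet hρ]
  have hIcc : ∀ (f : ℝ → ℝ), Integrable f →
      (∫ x in Set.Icc (-(tc ρ)) (tc ρ), f x) = ∫ x in (-(tc ρ))..(tc ρ), f x := by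
    intro f hf
    rw [integral_Icc_eq_integral_Ioc, intervalIntegral.integral_of_le hts]
  rw [integral_sub Hh.restrict Hg.restrict, hIcc _ Hh, hIcc _ Hg]
  have hg : (∫ x in (-(tc ρ))..(tc ρ), gpdf ρ x) = ∫ x in (-(sc ρ))..(sc ρ), hpdf x := by
    have e0 : (∫ x in (-(tc ρ))..(tc ρ), gpdf ρ x) =
        ∫ x in (-(tc ρ))..(tc ρ), ρ⁻¹ * hpdf (x / ρ) := by
      simp_rw [gh_div hρ]
    have e1 : -(tc ρ) / ρ = -(sc ρ) := by unfold tc; field_simp; all_goals ring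
    have e2 : tc ρ / ρ = sc ρ := by unfold tc; field_simp; all_goals ring
    rw [e0, intervalIntegral.integral_const_mul,
      intervalIntegral.integral_comp_div _ (ne_of_gt hρ0), e1, e2, smul_eq_mul, ← mul_assoc,
      inv_mul_cancel₀ (ne_of_gt hρ0), one_mul]
  have hadd : (∫ x in (-(tc ρ))..(-(sc ρ)), hpdf x) + (∫ x in (-(sc ρ))..(sc ρ), hpdf x) +
      (∫ x in (sc ρ)..(tc ρ), hpdf x) = ∫ x in (-(tc ρ))..(tc ρ), hpdf x := by
    rw [intervalIntegral.integral_add_adjacent_intervals Hh.intervalIntegrable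
      Hh.intervalIntegrable, intervalIntegral.integral_add_adjacent_intervals
      Hh.intervalIntegrable Hh.intervalIntegrable]
  have hflip : (∫ x in (-(tc ρ))..(-(sc ρ)), hpdf x) = ∫ x in (sc ρ)..(tc ρ), hpdf x := by
    rw [← intervalIntegral.integral_comp_neg fun x => hpdf x]
    exact intervalIntegral.integral_congr fun x _ => heven x
  rw [hg]
  linarith

lemma Ebound (hρ : 1 < ρ) :
    (∫ x in (sc ρ)..(tc ρ), hpdf x) ≤ (tc ρ - sc ρ) * hpdf (sc ρ) := by
  have hs := spos hρ
  have hmono : ∀ x ∈ Set.Icc (sc ρ) (tc ρ), hpdf x ≤ hpdf (sc ρ) := by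
    intro x hx
    rw [hval, hval]
    have : -x ^ 2 / 2 ≤ -(sc ρ) ^ 2 / 2 := by nlinarith [hx.1]
    exact mul_le_mul_of_nonneg_left (Real.exp_le_exp.2 this) (by positivity)
  have := intervalIntegral.integral_mono_on (slet hρ) hInt.intervalIntegrable
    intervalIntegrable_const hmono
  rwa [intervalIntegral.integral_const, smul_eq_mul] at this

lemma numeric (hρ : 1 < ρ) : 2 * ((tc ρ - sc ρ) * hpdf (sc ρ)) =
    2 / Real.sqrt π * (ρ - 1) * Real.sqrt (Lc ρ) * Real.exp (-(Lc ρ)) := by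
  have hρ0 : (0:ℝ) < ρ := by linarith
  have hL := Lpos hρ
  have h1 : -(sc ρ) ^ 2 / 2 = -(Lc ρ) := by rw [ssq hρ]; ring
  have h2 : sc ρ = Real.sqrt 2 * Real.sqrt (Lc ρ) := by
    unfold sc; rw [Real.sqrt_mul (by norm_num)]
  have h3 : Real.sqrt (2 * π) = Real.sqrt 2 * Real.sqrt π :=
    Real.sqrt_mul (by norm_num) _
  have hs2 : Real.sqrt 2 ≠ 0 := by positivity
  have hsπ : Real.sqrt π ≠ 0 := by positivity
  rw [hval, h1, h3]
  unfold tc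
  rw [h2]
  field_simp

lemma second (hρ : 1 < ρ) :
    2 / Real.sqrt π * (ρ - 1) * Real.sqrt (Lc ρ) * Real.exp (-(Lc ρ)) ≤
      Real.sqrt (2 / (π * Real.exp 1)) * (ρ - 1) := by
  have hL := (Lpos hρ).le
  set L := Lc ρ with hLdef
  have key : Real.sqrt L * Real.exp (-L) ≤ Real.sqrt ((2 * Real.exp 1)⁻¹) := by
    have h1 : Real.sqrt L * Real.exp (-L) = Real.sqrt (L * Real.exp (-L) ^ 2) := by
      rw [Real.sqrt_mul hL, Real.sqrt_sq (Real.exp_nonneg _)]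
    rw [h1]
    apply Real.sqrt_le_sqrt
    have h2 : Real.exp (-L) ^ 2 = Real.exp (-(2 * L)) := by
      rw [sq, ← Real.exp_add]; ring_nf
    rw [h2]
    have h3 : 2 * L ≤ Real.exp (2 * L - 1) := by
      linarith [Real.add_one_le_exp (2 * L - 1)]
    have hcd : Real.exp (2 * L - 1) * Real.exp (-(2 * L)) = Real.exp (-1) := by
      rw [← Real.exp_add]; ring_nf
    have h4 : (2 * Real.exp 1)⁻¹ = 2⁻¹ * Real.exp (-1) := by
      rw [mul_inv, Real.exp_neg]
    rw [h4]
    nlinarith [mul_le_mul_of_nonneg_right h3 (Real.exp_nonneg (-(2 * L))), hcd]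
  have hrw : Real.sqrt (2 / (π * Real.exp 1)) =
      2 / Real.sqrt π * Real.sqrt ((2 * Real.exp 1)⁻¹) := by
    have e0 : (2:ℝ) / (π * Real.exp 1) = 4 / π * (2 * Real.exp 1)⁻¹ := by
      have := Real.pi_pos; have := Real.exp_pos 1
      field_simp; ring
    have e1 : Real.sqrt (4 / π) = 2 / Real.sqrt π := by
      rw [show (4:ℝ) / π = 4 / π from rfl, Real.sqrt_div (by norm_num : (0:ℝ) ≤ 4),
        show (4:ℝ) = 2 ^ 2 by norm_num, Real.sqrt_sq (by norm_num : (0:ℝ) ≤ 2)]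
    rw [e0, Real.sqrt_mul (by positivity), e1]
  have hfac : 0 ≤ 2 / Real.sqrt π * (ρ - 1) := mul_nonneg (by positivity) (by linarith)
  have hmul := mul_le_mul_of_nonneg_left key hfac
  rw [hrw]
  nlinarith [hmul]

end Stmt3Aux

theorem stmt_3 (ρ : ℝ) (hρ : 1 < ρ) :
    dTV (gaussianReal 0 (Real.toNNReal (ρ ^ 2))) (gaussianReal 0 1) ≤
      2 / Real.sqrt Real.pi * (ρ - 1) * Real.sqrt (Real.log ρ / (ρ ^ 2 - 1)) *
        Real.exp (-(Real.log ρ / (ρ ^ 2 - 1))) ∧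
    2 / Real.sqrt Real.pi * (ρ - 1) * Real.sqrt (Real.log ρ / (ρ ^ 2 - 1)) *
        Real.exp (-(Real.log ρ / (ρ ^ 2 - 1))) ≤
      Real.sqrt (2 / (Real.pi * Real.exp 1)) * (ρ - 1) := by
  constructor
  · have hv := Stmt3Aux.vne hρ
    apply ciSup_le
    intro A
    have h1 : (gaussianReal 0 (Real.toNNReal (ρ ^ 2)) A.1).toReal =
        ∫ x in A.1, Stmt3Aux.gpdf ρ x := by
      unfold Stmt3Aux.gpdf
      rw [gaussianReal_apply_eq_integral 0 hv,
        ENNReal.toReal_ofReal (integral_nonneg fun x => gaussianPDFReal_nonneg _ _ x)]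
    have h2 : (gaussianReal 0 1 A.1).toReal = ∫ x in A.1, Stmt3Aux.hpdf x := by
      unfold Stmt3Aux.hpdf
      rw [gaussianReal_apply_eq_integral 0 one_ne_zero,
        ENNReal.toReal_ofReal (integral_nonneg fun x => gaussianPDFReal_nonneg _ _ x)]
    rw [h1, h2]
    calc |(∫ x in A.1, Stmt3Aux.gpdf ρ x) - ∫ x in A.1, Stmt3Aux.hpdf x|
        ≤ ∫ x in Set.Icc (-(Stmt3Aux.tc ρ)) (Stmt3Aux.tc ρ),
            (Stmt3Aux.hpdf x - Stmt3Aux.gpdf ρ x) := Stmt3Aux.keyA hρ A.2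
      _ = 2 * ∫ x in (Stmt3Aux.sc ρ)..(Stmt3Aux.tc ρ), Stmt3Aux.hpdf x := Stmt3Aux.Eval hρ
      _ ≤ 2 * ((Stmt3Aux.tc ρ - Stmt3Aux.sc ρ) * Stmt3Aux.hpdf (Stmt3Aux.sc ρ)) := by
          linarith [Stmt3Aux.Ebound hρ]
      _ = 2 / Real.sqrt Real.pi * (ρ - 1) * Real.sqrt (Real.log ρ / (ρ ^ 2 - 1)) *
            Real.exp (-(Real.log ρ / (ρ ^ 2 - 1))) := Stmt3Aux.numeric hρ
  · exact Stmt3Aux.second hρ
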